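/- For all m, n with n ≥ m ≥ 1, writing n = km + r with 0 ≤ r < m, we have π_opt(G_{n×n}) ≤ k²·π_opt(G_{m×m}) + r² + 2rkm. -/

import Mathlib

/-- A pebbling move: remove two pebbles from `u`, add one pebble at a neighbour `v`. -/
def PebblingMove {V : Type*} [DecidableEq V] (G : SimpleGraph V) (D D' : V → ℕ) : Prop :=
  ∃ u v, G.Adj u v ∧ 2 ≤ D u ∧
    D' = Function.update (Function.update D u (D u - 2)) v (D v + 1)

/-- `t` is reachable under `D`: some sequence of pebbling moves puts a pebble on `t`. -/
def PebbleReachable {V : Type*} [DecidableEq V] (G : SimpleGraph V) (D : V → ℕ) (t : V) : Prop :=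
  ∃ D', Relation.ReflTransGen (PebblingMove G) D D' ∧ 1 ≤ D' t

/-- `D` is solvable if every vertex is reachable under it. -/
def SolvableDistr {V : Type*} [DecidableEq V] (G : SimpleGraph V) (D : V → ℕ) : Prop :=
  ∀ t, PebbleReachable G D t

/-- The `r × c` grid graph. -/
def fgrid (r c : ℕ) : SimpleGraph (Fin r × Fin c) where
  Adj p q := ((p.1 : ℤ) - q.1).natAbs + ((p.2 : ℤ) - q.2).natAbs = 1
  symm := ⟨by intro p q h; omega⟩
  loopless := ⟨by intro p h; simp at h⟩

/-- Optimal pebbling number of the `n × n` grid. -/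
noncomputable def piOpt (n : ℕ) : ℕ :=
  sInf {s : ℕ | ∃ D : Fin n × Fin n → ℕ, SolvableDistr (fgrid n n) D ∧ ∑ v, D v = s}

/-!
An injective graph homomorphism transports pebbling sequences, even when the target carries
extra pebbles. So an optimal distribution of the `m × m` grid, copied onto each of the `k²`
translated `m × m` blocks of the `km × km` corner of the `n × n` grid, reaches every vertex of
that corner, and one pebble on each of the other `n² - (km)² = r² + 2rkm` vertices covers the rest.
-/

open Finset

section Simulation

variable {V W : Type*} [DecidableEq V] [DecidableEq W] {G : SimpleGraph V} {H : SimpleGraph W}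

theorem PebblingMove.map (f : G →g H) (hf : Function.Injective f) {D D' : V → ℕ} {E : W → ℕ}
    (h : PebblingMove G D D') (hDE : ∀ x, D x ≤ E (f x)) :
    ∃ E', PebblingMove H E E' ∧ ∀ x, D' x ≤ E' (f x) := by
  obtain ⟨u, v, huv, hu, rfl⟩ := h
  refine ⟨_, ⟨f u, f v, f.map_adj huv, hu.trans (hDE u), rfl⟩, fun x => ?_⟩
  rcases eq_or_ne x v with rfl | hxv
  · simpa using hDE x
  rw [Function.update_of_ne hxv, Function.update_of_ne (hf.ne hxv)]
  rcases eq_or_ne x u with rfl | hxu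
  · simpa using Nat.sub_le_sub_right (hDE x) 2
  rw [Function.update_of_ne hxu, Function.update_of_ne (hf.ne hxu)]
  exact hDE x

theorem PebblingMove.reflTransGen_map (f : G →g H) (hf : Function.Injective f)
    {D D' : V → ℕ} {E : W → ℕ} (h : Relation.ReflTransGen (PebblingMove G) D D')
    (hDE : ∀ x, D x ≤ E (f x)) :
    ∃ E', Relation.ReflTransGen (PebblingMove H) E E' ∧ ∀ x, D' x ≤ E' (f x) := by
  induction h with
  | refl => exact ⟨E, .refl, hDE⟩
  | tail _ hmove ih =>
    obtain ⟨E', hEE', hE'⟩ := ih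
    obtain ⟨E'', hE'E'', hE''⟩ := hmove.map f hf hE'
    exact ⟨E'', hEE'.tail hE'E'', hE''⟩

theorem PebbleReachable.map (f : G →g H) (hf : Function.Injective f) {D : V → ℕ} {E : W → ℕ}
    {t : V} (h : PebbleReachable G D t) (hDE : ∀ x, D x ≤ E (f x)) :
    PebbleReachable H E (f t) := by
  obtain ⟨D', hDD', ht⟩ := h
  obtain ⟨E', hEE', hE'⟩ := PebblingMove.reflTransGen_map f hf hDD' hDE
  exact ⟨E', hEE', ht.trans (hE' t)⟩

theorem PebbleReachable.of_one_le {D : V → ℕ} {t : V} (h : 1 ≤ D t) : PebbleReachable G D t :=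
  ⟨D, .refl, h⟩

end Simulation

theorem piOpt_le {n : ℕ} {D : Fin n × Fin n → ℕ} (hD : SolvableDistr (fgrid n n) D) :
    piOpt n ≤ ∑ v, D v :=
  Nat.sInf_le ⟨D, hD, rfl⟩

theorem exists_solvableDistr_sum_eq_piOpt (n : ℕ) :
    ∃ D : Fin n × Fin n → ℕ, SolvableDistr (fgrid n n) D ∧ ∑ v, D v = piOpt n :=
  Nat.sInf_mem (s := {s | ∃ D : Fin n × Fin n → ℕ, SolvableDistr (fgrid n n) D ∧ ∑ v, D v = s})
    ⟨_, fun _ => 1, fun _ => .of_one_le le_rfl, rfl⟩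

def fgridTranslate {r c R C : ℕ} (a b : ℕ) (ha : a + r ≤ R) (hb : b + c ≤ C) :
    fgrid r c ↪g fgrid R C where
  toFun p := (⟨a + p.1, by omega⟩, ⟨b + p.2, by omega⟩)
  inj' p q h := by
    simp only [Prod.mk.injEq, Fin.mk.injEq, Nat.add_left_cancel_iff] at h
    exact Prod.ext (Fin.ext h.1) (Fin.ext h.2)
  map_rel_iff' {p q} := by
    change (fgrid R C).Adj (⟨a + p.1, _⟩, ⟨b + p.2, _⟩) (⟨a + q.1, _⟩, ⟨b + q.2, _⟩) ↔ _
    simp only [fgrid]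
    push_cast
    omega

theorem sum_range_mul_ofNat {M : Type*} [AddCommMonoid M] (k m : ℕ) [NeZero m] (f : Fin m → M) :
    ∑ i ∈ range (k * m), f (Fin.ofNat m i) = k • ∑ x, f x := by
  rw [Finset.sum_range, ← finProdFinEquiv.sum_comp, Fintype.sum_prod_type]
  have h : ∀ (a : Fin k) (x : Fin m), Fin.ofNat m (finProdFinEquiv (a, x)) = x := by
    intro a x
    ext
    simp [finProdFinEquiv, Nat.add_mul_mod_self_left, Nat.mod_eq_of_lt x.isLt]
  simp only [h, sum_const, card_univ, Fintype.card_fin]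

-- Indexed by `ℕ × ℕ` so that it restricts to the `n × n` grid for every `n ≥ k * m`.
def tileDistr (k m : ℕ) [NeZero m] (D : Fin m × Fin m → ℕ) (i j : ℕ) : ℕ :=
  if i < k * m ∧ j < k * m then D (Fin.ofNat m i, Fin.ofNat m j) else 1

section Tiling

variable {k m n : ℕ} [NeZero m]

theorem tileDistr_mul_add (D : Fin m × Fin m → ℕ) {a b : ℕ} (ha : a < k) (hb : b < k)
    (x y : Fin m) : tileDistr k m D (m * a + x) (m * b + y) = D (x, y) := by
  have hofNat : ∀ c (z : Fin m), Fin.ofNat m (m * c + z) = z := fun c z => by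
    ext
    simp [Nat.mod_eq_of_lt z.isLt]
  have hx : m * a + x < k * m := by nlinarith [x.isLt]
  have hy : m * b + y < k * m := by nlinarith [y.isLt]
  simp only [tileDistr, if_pos (And.intro hx hy), hofNat]

theorem sum_tileDistr (D : Fin m × Fin m → ℕ) (h : k * m ≤ n) :
    ∑ p : Fin n × Fin n, tileDistr k m D p.1 p.2 = k ^ 2 * ∑ v, D v + (n ^ 2 - (k * m) ^ 2) := by
  have hrange : ∑ p : Fin n × Fin n, tileDistr k m D p.1 p.2 =
      ∑ p ∈ range n ×ˢ range n, tileDistr k m D p.1 p.2 := by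
    simp only [Fintype.sum_prod_type, sum_product, sum_range]
  have hsquare : {p ∈ range n ×ˢ range n | p.1 < k * m ∧ p.2 < k * m} =
      range (k * m) ×ˢ range (k * m) := by
    ext ⟨i, j⟩
    simp only [mem_filter, mem_product, mem_range]
    omega
  have hcard := card_filter_add_card_filter_not (s := range n ×ˢ range n)
    (fun p : ℕ × ℕ => p.1 < k * m ∧ p.2 < k * m)
  have hblock : ∑ p ∈ range (k * m) ×ˢ range (k * m), D (Fin.ofNat m p.1, Fin.ofNat m p.2) =
      k ^ 2 * ∑ v, D v := by
    rw [sum_product]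
    calc ∑ i ∈ range (k * m), ∑ j ∈ range (k * m), D (Fin.ofNat m i, Fin.ofNat m j)
        = ∑ i ∈ range (k * m), k • ∑ y, D (Fin.ofNat m i, y) :=
          sum_congr rfl fun i _ => sum_range_mul_ofNat k m fun y => D (Fin.ofNat m i, y)
      _ = k • ∑ x, k • ∑ y, D (x, y) := sum_range_mul_ofNat k m fun x => k • ∑ y, D (x, y)
      _ = k ^ 2 * ∑ v, D v := by
          simp only [smul_eq_mul, ← mul_sum, Fintype.sum_prod_type]
          ring
  rw [hrange]
  simp only [tileDistr]
  rw [sum_ite, hsquare, hblock, sum_const, smul_eq_mul, mul_one]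
  rw [hsquare] at hcard
  simp only [card_product, card_range, ← sq] at hcard
  omega

theorem solvableDistr_tileDistr {D : Fin m × Fin m → ℕ} (hD : SolvableDistr (fgrid m m) D)
    (h : k * m ≤ n) : SolvableDistr (fgrid n n) fun p => tileDistr k m D p.1 p.2 := by
  rintro ⟨i, j⟩
  by_cases hij : (i : ℕ) < k * m ∧ (j : ℕ) < k * m
  swap
  · exact .of_one_le (by simp [tileDistr, hij])
  have hi : (i : ℕ) / m < k := (Nat.div_lt_iff_lt_mul (NeZero.pos m)).2 hij.1
  have hj : (j : ℕ) / m < k := (Nat.div_lt_iff_lt_mul (NeZero.pos m)).2 hij.2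
  let φ : fgrid m m ↪g fgrid n n :=
    fgridTranslate (m * (i / m)) (m * (j / m)) (by nlinarith) (by nlinarith)
  have hφ : φ (Fin.ofNat m i, Fin.ofNat m j) = (i, j) :=
    Prod.ext (Fin.ext (Nat.div_add_mod i m)) (Fin.ext (Nat.div_add_mod j m))
  rw [← hφ]
  exact (hD _).map φ.toHom φ.injective fun x => (tileDistr_mul_add D hi hj x.1 x.2).ge

end Tiling

theorem piOpt_tiling_bound_general (m n k r : ℕ) (hm : 1 ≤ m) (hn : n = k * m + r) :
    piOpt n ≤ k ^ 2 * piOpt m + r ^ 2 + 2 * r * k * m := by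
  have : NeZero m := ⟨by omega⟩
  obtain ⟨D, hD, hDsum⟩ := exists_solvableDistr_sum_eq_piOpt m
  have hkm : k * m ≤ n := by omega
  calc piOpt n ≤ ∑ p : Fin n × Fin n, tileDistr k m D p.1 p.2 :=
        piOpt_le (solvableDistr_tileDistr hD hkm)
    _ = k ^ 2 * piOpt m + (n ^ 2 - (k * m) ^ 2) := by rw [sum_tileDistr D hkm, hDsum]
    _ = k ^ 2 * piOpt m + r ^ 2 + 2 * r * k * m := by
        have hsq : n ^ 2 - (k * m) ^ 2 = r ^ 2 + 2 * r * k * m := by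
          rw [hn]
          exact Nat.sub_eq_of_eq_add (by ring)
        rw [hsq, add_assoc]

/-- Tiling bound: if `n = k·m + r` with `0 ≤ r < m`, then
`π_opt(G_{n×n}) ≤ k²·π_opt(G_{m×m}) + r² + 2rkm`. -/
theorem piOpt_tiling_bound (m n k r : ℕ) (hm : 1 ≤ m) (hmn : m ≤ n)
    (hn : n = k * m + r) (hr : r < m) :
    piOpt n ≤ k ^ 2 * piOpt m + r ^ 2 + 2 * r * k * m :=
  piOpt_tiling_bound_general m n k r hm hn
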